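/- arXiv:2310.03126 — 2 statements merged into one kernel-verified Lean document; each statement's English description precedes it below -/
import Mathlib

section
/- Let G and H be étale groupoids with an actor h : G ↷ H (a continuous left action of G on H, with anchor ρ : H → G⁽⁰⁾ satisfying ρ(xy) = ρ(x), commuting with right multiplication of H on itself: γ·(xy) = (γ·x)y and s(γ·x) = s(x)). Then the multiplication map G ×_{s,ρ} H → H, (γ, x) ↦ γ·x, is an open map. -/
open Topology

/-- A topological groupoid: a set with a partially defined multiplication
(`D a b` expresses composability), an inversion, satisfying the groupoid
axioms, such that inversion is continuous and multiplication is continuous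
on the set of composable pairs. -/
structure TopGroupoid (G : Type*) [TopologicalSpace G] where
  /-- composability -/
  D : G → G → Prop
  /-- partially defined multiplication (junk values off `D`) -/
  comp : G → G → G
  /-- inversion -/
  inv : G → G
  inv_inv : ∀ g, inv (inv g) = g
  d_inv : ∀ g, D g (inv g)
  d_eq : ∀ a b, D a b ↔ comp (inv a) a = comp b (inv b)
  d_comp_left : ∀ {a b c}, D a b → D b c → D (comp a b) c
  d_comp_right : ∀ {a b c}, D a b → D b c → D a (comp b c)
  assoc : ∀ {a b c}, D a b → D b c → comp (comp a b) c = comp a (comp b c)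
  cancel_left : ∀ {g h}, D g h → comp (inv g) (comp g h) = h
  cancel_right : ∀ {g h}, D g h → comp (comp g h) (inv h) = g
  continuous_inv : Continuous inv
  continuousOn_comp : ContinuousOn (fun p : G × G => comp p.1 p.2) {p | D p.1 p.2}

namespace TopGroupoid

variable {G : Type*} [TopologicalSpace G]

/-- The source map `s(γ) = γ⁻¹γ`. -/
def src (S : TopGroupoid G) (g : G) : G := S.comp (S.inv g) g

/-- The range map `r(γ) = γγ⁻¹`. -/
def rng (S : TopGroupoid G) (g : G) : G := S.comp g (S.inv g)

/-- The unit space `G⁽⁰⁾ = {γ⁻¹γ : γ ∈ G}`. -/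
def unitSpace (S : TopGroupoid G) : Set G := Set.range S.src

/-- A groupoid is étale if its range map is a local homeomorphism. -/
def IsEtale (S : TopGroupoid G) : Prop := IsLocalHomeomorph S.rng

/-- An open bisection: an open set on which both the source and the range map
are injective (hence, in an étale groupoid, restrict to homeomorphisms onto
their open images). -/
def IsOpenBisection (S : TopGroupoid G) (U : Set G) : Prop :=
  IsOpen U ∧ Set.InjOn S.src U ∧ Set.InjOn S.rng U

/-- Pointwise product of subsets: `U·V = {γη : γ ∈ U, η ∈ V, s γ = r η}`. -/
def setMul (S : TopGroupoid G) (U V : Set G) : Set G :=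
  {g | ∃ a ∈ U, ∃ b ∈ V, S.D a b ∧ g = S.comp a b}

/-- Pointwise inverse of a subset: `U⁻¹ = {γ⁻¹ : γ ∈ U}`. -/
def setInv (S : TopGroupoid G) (U : Set G) : Set G := S.inv '' U

end TopGroupoid

/-- An actor `G ↷ H`: a continuous left action of `G` on `H` (with anchor map
`ρ : H → G⁽⁰⁾`) which commutes with the right multiplication of `H` on itself. -/
structure Actor {G : Type*} {H : Type*} [TopologicalSpace G] [TopologicalSpace H]
    (S : TopGroupoid G) (T : TopGroupoid H) where
  /-- the anchor map -/
  rho : H → G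
  /-- the action multiplication, partially defined (junk off `s γ = ρ x`) -/
  act : G → H → H
  rho_mem : ∀ x, rho x ∈ S.unitSpace
  continuous_rho : Continuous rho
  continuousOn_act :
    ContinuousOn (fun p : G × H => act p.1 p.2) {p | S.src p.1 = rho p.2}
  rho_act : ∀ {γ x}, S.src γ = rho x → rho (act γ x) = S.rng γ
  act_assoc : ∀ {γ₁ γ₂ x}, S.D γ₁ γ₂ → S.src γ₂ = rho x →
      act γ₁ (act γ₂ x) = act (S.comp γ₁ γ₂) x
  act_unit : ∀ x, act (rho x) x = x
  rho_comp : ∀ {x y}, T.D x y → rho (T.comp x y) = rho x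
  src_act : ∀ {γ x}, S.src γ = rho x → T.src (act γ x) = T.src x
  act_right : ∀ {γ x y}, S.src γ = rho x → T.D x y →
      act γ (T.comp x y) = T.comp (act γ x) y

namespace Actor

variable {G H : Type*} [TopologicalSpace G] [TopologicalSpace H]
variable {S : TopGroupoid G} {T : TopGroupoid H}

/-- An actor is free if the only arrows fixing a unit are units. -/
def Free (A : Actor S T) : Prop :=
  ∀ t ∈ T.unitSpace, ∀ γ : G, S.src γ = A.rho t → A.act γ t = t → γ ∈ S.unitSpace

/-- An actor is proper if the anchor map restricted to the unit space of `H`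
is a proper map. -/
def Proper (A : Actor S T) : Prop := IsProperMap (T.unitSpace.restrict A.rho)

/-- `U·V = {γ·x : γ ∈ U, x ∈ V, s γ = ρ x}`. -/
def actSet (A : Actor S T) (U : Set G) (V : Set H) : Set H :=
  {y | ∃ γ ∈ U, ∃ x ∈ V, S.src γ = A.rho x ∧ y = A.act γ x}

end Actor

/-! Since `G` is étale, the range map has continuous local inverses `σ` near every arrow `γ₀`.
Then `z ↦ (σ (ρ z), σ (ρ z)⁻¹ · z)` is a continuous local section of the action map through
`(γ₀, x₀)`, and a map admitting continuous local sections through every point is open. -/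

theorem isOpenMap_domRestrict_of_localSections {X Y : Type*} [TopologicalSpace X]
    [TopologicalSpace Y] {s : Set X} {f : X → Y}
    (h : ∀ x ∈ s, ∃ g : Y → X, ContinuousAt g (f x) ∧ g (f x) = x ∧
      ∀ᶠ y in 𝓝 (f x), g y ∈ s ∧ f (g y) = y) :
    IsOpenMap (s.domRestrict f) := by
  refine IsOpenMap.of_nhds_le fun ⟨x, hx⟩ t ht => ?_
  obtain ⟨g, hgc, hgx, hg⟩ := h x hx
  obtain ⟨t', ht', hst⟩ := mem_nhds_subtype s ⟨x, hx⟩ _ |>.mp ht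
  have hgt : ∀ᶠ y in 𝓝 (f x), g y ∈ t' := hgc.preimage_mem_nhds (by rwa [hgx])
  filter_upwards [hg, hgt] with y ⟨hys, hfy⟩ hyt
  exact hfy ▸ @hst ⟨g y, hys⟩ hyt

namespace TopGroupoid

variable {G : Type*} [TopologicalSpace G] (S : TopGroupoid G)

theorem src_inv (g : G) : S.src (S.inv g) = S.rng g := by
  simp only [src, rng, S.inv_inv]

theorem rng_inv (g : G) : S.rng (S.inv g) = S.src g := by
  simp only [src, rng, S.inv_inv]

theorem d_inv_self (g : G) : S.D (S.inv g) g := by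
  simpa only [S.inv_inv] using S.d_inv (S.inv g)

end TopGroupoid

namespace Actor

variable {G H : Type*} [TopologicalSpace G] [TopologicalSpace H]
variable {S : TopGroupoid G} {T : TopGroupoid H} (A : Actor S T)

theorem act_inv_act {γ : G} {x : H} (h : S.src γ = A.rho x) :
    A.act (S.inv γ) (A.act γ x) = x := by
  rw [A.act_assoc (S.d_inv_self γ) h]
  change A.act (S.src γ) x = x
  rw [h, A.act_unit]

theorem act_act_inv {γ : G} {z : H} (h : S.rng γ = A.rho z) :
    A.act γ (A.act (S.inv γ) z) = z := by
  rw [A.act_assoc (S.d_inv γ) (S.src_inv γ ▸ h)]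
  change A.act (S.rng γ) z = z
  rw [h, A.act_unit]

theorem src_eq_rho_act_inv {γ : G} {z : H} (h : S.rng γ = A.rho z) :
    S.src γ = A.rho (A.act (S.inv γ) z) := by
  rw [A.rho_act (S.src_inv γ ▸ h), S.rng_inv]

theorem continuousOn_act_inv {f : H → G} {O : Set H} (hf : ContinuousOn f O)
    (hfO : ∀ z ∈ O, S.rng (f z) = A.rho z) :
    ContinuousOn (fun z => A.act (S.inv (f z)) z) O :=
  A.continuousOn_act.comp ((S.continuous_inv.comp_continuousOn hf).prodMk continuousOn_id)
    fun z hz => (S.src_inv (f z)).trans (hfO z hz)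

end Actor

theorem actor_mul_isOpenMap_general {G H : Type*} [TopologicalSpace G] [TopologicalSpace H]
    {S : TopGroupoid G} {T : TopGroupoid H} (hS : S.IsEtale) (A : Actor S T) :
    IsOpenMap (fun p : {p : G × H // S.src p.1 = A.rho p.2} => A.act p.1.1 p.1.2) := by
  refine isOpenMap_domRestrict_of_localSections
    (s := {p : G × H | S.src p.1 = A.rho p.2}) (f := fun p => A.act p.1 p.2) ?_
  rintro ⟨γ₀, x₀⟩ (hp : S.src γ₀ = A.rho x₀)
  set σ := hS.localInverseAt γ₀
  have hρ₀ : A.rho (A.act γ₀ x₀) = S.rng γ₀ := A.rho_act hp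
  have hσ₀ : σ (S.rng γ₀) = γ₀ := hS.localInverseAt_apply_self
  set O := A.rho ⁻¹' σ.source
  have hO : O ∈ 𝓝 (A.act γ₀ x₀) :=
    (σ.open_source.preimage A.continuous_rho).mem_nhds <| by
      rw [Set.mem_preimage, hρ₀]
      exact hS.apply_self_mem_localInverseAt_source
  have hσO : ∀ z ∈ O, S.rng (σ (A.rho z)) = A.rho z := fun _ hz =>
    hS.apply_localInverseAt_of_mem hz
  have hσρ : ContinuousOn (fun z => σ (A.rho z)) O :=
    σ.continuousOn.comp A.continuous_rho.continuousOn fun _ hz => hz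
  refine ⟨fun z => (σ (A.rho z), A.act (S.inv (σ (A.rho z))) z),
    (hσρ.prodMk (A.continuousOn_act_inv hσρ hσO)).continuousAt hO, ?_, ?_⟩
  · dsimp only
    rw [hρ₀, hσ₀, A.act_inv_act hp]
  · filter_upwards [hO] with z hz
    exact ⟨A.src_eq_rho_act_inv (hσO z hz), A.act_act_inv (hσO z hz)⟩

/-- For an actor `h : G ↷ H` between étale groupoids, the multiplication map
`G ×_{s,ρ} H → H`, `(γ, x) ↦ γ·x`, is an open map. -/
theorem actor_mul_isOpenMap {G H : Type*} [TopologicalSpace G] [TopologicalSpace H]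
    {S : TopGroupoid G} {T : TopGroupoid H} (hS : S.IsEtale) (hT : T.IsEtale)
    (A : Actor S T) :
    IsOpenMap (fun p : {p : G × H // S.src p.1 = A.rho p.2} => A.act p.1.1 p.1.2) :=
  actor_mul_isOpenMap_general hS A
end

section
/- Let A be a C*-algebra in which every hereditary C*-subalgebra is a two-sided ideal. Then A is commutative. -/
/-!
We prove that a (non-unital) C*-algebra in which every closed hereditary
C*-subalgebra is a two-sided ideal is commutative.

Outline: for positive `a`, the closure of `a * A * a` is a closed hereditary
star-subalgebra (hereditarity is the standard fact `0 ≤ x ≤ b → x ∈ closure (b A b)`,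
proved via the approximate units `f_m(b)`, `f_m(t) = (m+1)t/((m+1)t+1)`).  The
hypothesis then makes it a two-sided ideal, which yields that orthogonal positive
elements `p ⊥ q` satisfy `p * y * q = 0` for every `y`.  A partition-of-unity
argument in the functional calculus of `a` (hat functions of width `δ`) then
bounds `‖a * b - b * a‖` by `O(δ)` for positive `a, b`, whence `A` is commutative.
-/

namespace CommHSA

/-! ### Real-valued helper functions -/

/-- Approximate-unit profile function. -/
noncomputable def fm (m : ℕ) (t : ℝ) : ℝ := ((m : ℝ) + 1) * t / (((m : ℝ) + 1) * t + 1)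

lemma fm_zero (m : ℕ) : fm m 0 = 0 := by simp [fm]

lemma fm_denom_pos (m : ℕ) {t : ℝ} (ht : 0 ≤ t) : 0 < ((m : ℝ) + 1) * t + 1 := by positivity

lemma fm_nonneg (m : ℕ) {t : ℝ} (ht : 0 ≤ t) : 0 ≤ fm m t :=
  div_nonneg (by positivity) (fm_denom_pos m ht).le

lemma fm_le_one (m : ℕ) {t : ℝ} (ht : 0 ≤ t) : fm m t ≤ 1 := by
  rw [fm, div_le_one (fm_denom_pos m ht)]; linarith

lemma abs_fm_le_one (m : ℕ) {t : ℝ} (ht : 0 ≤ t) : |fm m t| ≤ 1 :=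
  abs_le.2 ⟨by linarith [fm_nonneg m ht], fm_le_one m ht⟩

lemma fm_mul_le (m : ℕ) {t : ℝ} (ht : 0 ≤ t) : t * (1 - fm m t) ≤ 1 / ((m : ℝ) + 1) := by
  have hd := fm_denom_pos m ht
  have h1 : 1 - fm m t = 1 / (((m : ℝ) + 1) * t + 1) := by
    rw [fm]; field_simp; ring
  rw [h1, mul_one_div, div_le_div_iff₀ hd (by positivity)]
  nlinarith [ht]

lemma fm_mul_nonneg (m : ℕ) {t : ℝ} (ht : 0 ≤ t) : 0 ≤ t * (1 - fm m t) :=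
  mul_nonneg ht (by linarith [fm_le_one m ht])

/-- The identity `(m+1) * (t - t * fm m t) = fm m t` for `t ≥ 0`. -/
lemma fm_identity (m : ℕ) {t : ℝ} (ht : 0 ≤ t) :
    ((m : ℝ) + 1) * (t - t * fm m t) = fm m t := by
  have hd := fm_denom_pos m ht
  rw [fm]; field_simp; ring

lemma fm_sq_bound (m : ℕ) {t : ℝ} (ht : 0 ≤ t) :
    |t - t * fm m t - fm m t * (t - t * fm m t)| ≤ 1 / ((m : ℝ) + 1) := by
  have h0 : t - t * fm m t - fm m t * (t - t * fm m t) = t * (1 - fm m t) * (1 - fm m t) := by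
    ring
  rw [h0, abs_of_nonneg (mul_nonneg (fm_mul_nonneg m ht) (by linarith [fm_le_one m ht]))]
  calc t * (1 - fm m t) * (1 - fm m t) ≤ t * (1 - fm m t) * 1 := by
        have := fm_mul_nonneg m ht
        have := fm_nonneg m ht
        nlinarith
    _ ≤ 1 / ((m : ℝ) + 1) := by rw [mul_one]; exact fm_mul_le m ht

/-- Hat function profile. -/
noncomputable def hatψ (s : ℝ) : ℝ := max 0 (1 - |s|)

lemma hatψ_nonneg (s : ℝ) : 0 ≤ hatψ s := le_max_left _ _

lemma hatψ_le_one (s : ℝ) : hatψ s ≤ 1 := by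
  have h := abs_nonneg s
  rw [hatψ, max_le_iff]
  constructor <;> linarith

lemma hatψ_eq_zero {s : ℝ} (hs : 1 ≤ |s|) : hatψ s = 0 := by
  rw [hatψ, max_eq_left]; linarith

lemma abs_lt_one_of_hatψ_ne {s : ℝ} (hs : hatψ s ≠ 0) : |s| < 1 := by
  by_contra h
  exact hs (hatψ_eq_zero (not_lt.1 h))

lemma sum_hatψ (N : ℕ) {s : ℝ} (h0 : 0 ≤ s) (hN : s ≤ N) :
    ∑ i ∈ Finset.range (N + 1), hatψ (s - i) = 1 := by
  induction N with
  | zero =>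
    simp only [Nat.cast_zero] at hN
    have : s = 0 := le_antisymm hN h0
    simp [this, hatψ]
  | succ N ih =>
    rw [Finset.sum_range_succ]
    rcases le_or_gt s N with h | h
    · rw [ih h, hatψ_eq_zero]
      · ring
      · rw [abs_of_nonpos (by push_cast; linarith)]
        push_cast; linarith
    · -- s ∈ (N, N+1]
      have hsN : (N : ℝ) < s := h
      have hsN1 : s ≤ (N : ℝ) + 1 := by push_cast at hN ⊢; linarith
      rw [Finset.sum_range_succ]
      have hz : ∑ i ∈ Finset.range N, hatψ (s - i) = 0 := by
        apply Finset.sum_eq_zero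
        intro i hi
        have hilt := Finset.mem_range.1 hi
        have hi' : (i : ℝ) ≤ (N : ℝ) - 1 := by
          have : (i : ℝ) + 1 ≤ (N : ℝ) := by exact_mod_cast hilt
          linarith
        apply hatψ_eq_zero
        rw [abs_of_nonneg (by linarith)]
        linarith
      rw [hz]
      have h1 : hatψ (s - N) = 1 - (s - N) := by
        rw [hatψ, abs_of_nonneg (by linarith), max_eq_right (by linarith)]
      have h2 : hatψ (s - (N + 1)) = 1 - ((N : ℝ) + 1 - s) := by
        rw [hatψ, abs_of_nonpos (by push_cast; linarith), max_eq_right (by push_cast; linarith)]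
        push_cast; ring
      push_cast at h1 h2 ⊢
      rw [h1, h2]; ring


lemma hatψ_continuous : Continuous hatψ :=
  continuous_const.max (continuous_const.sub continuous_abs)

lemma sum_hatψ_le (N : ℕ) (s : Finset ℕ) {x : ℝ} (h0 : 0 ≤ x) (hN : x ≤ N) :
    ∑ i ∈ s, hatψ (x - i) ≤ 1 := by
  have hsub : s ⊆ Finset.range (N + 1) ∪ s := Finset.subset_union_right
  calc ∑ i ∈ s, hatψ (x - i) ≤ ∑ i ∈ Finset.range (N + 1) ∪ s, hatψ (x - i) :=
        Finset.sum_le_sum_of_subset_of_nonneg hsub (fun i _ _ => hatψ_nonneg _)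
    _ = ∑ i ∈ Finset.range (N + 1), hatψ (x - i)
        + ∑ i ∈ s \ Finset.range (N + 1), hatψ (x - i) := by
        rw [← Finset.sum_union (Finset.disjoint_sdiff)]
        congr 1
        rw [Finset.union_sdiff_self_eq_union]
    _ = 1 + ∑ i ∈ s \ Finset.range (N + 1), hatψ (x - i) := by rw [sum_hatψ N h0 hN]
    _ = 1 := by
        rw [Finset.sum_eq_zero, add_zero]
        intro i hi
        have hi2 := Finset.mem_sdiff.1 hi
        have : N + 1 ≤ i := by
          by_contra hcon
          exact hi2.2 (Finset.mem_range.2 (by omega))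
        apply hatψ_eq_zero
        have hNi : (N:ℝ) + 1 ≤ i := by exact_mod_cast this
        rw [abs_of_nonpos (by linarith)]
        linarith

/-- tridiagonal rearrangement of a double sum -/
lemma sum_tridiag {M : Type*} [AddCommMonoid M] (N : ℕ) (g : ℕ → ℕ → M)
    (hg : ∀ i j, i + 2 ≤ j ∨ j + 2 ≤ i → g i j = 0) :
    ∑ i ∈ Finset.range (N+1), ∑ j ∈ Finset.range (N+1), g i j
      = (∑ i ∈ Finset.range (N+1), g i i) + (∑ i ∈ Finset.range N, g i (i+1))
        + (∑ i ∈ Finset.range N, g (i+1) i) := by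
  induction N with
  | zero => simp
  | succ n ih =>
    rw [Finset.sum_range_succ]
    have hinner : ∀ i ∈ Finset.range (n+1),
        ∑ j ∈ Finset.range (n+1+1), g i j
          = (∑ j ∈ Finset.range (n+1), g i j) + g i (n+1) :=
      fun i _ => Finset.sum_range_succ _ _
    rw [Finset.sum_congr rfl hinner, Finset.sum_add_distrib, ih]
    have h2 : ∑ i ∈ Finset.range (n+1), g i (n+1)
        = g n (n+1) := by
      rw [Finset.sum_range_succ, Finset.sum_eq_zero, zero_add]
      intro i hi
      exact hg i (n+1) (Or.inl (by have := Finset.mem_range.1 hi; omega))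
    have h3 : ∑ j ∈ Finset.range (n+1+1), g (n+1) j
        = g (n+1) (n+1) + g (n+1) n := by
      rw [Finset.sum_range_succ, Finset.sum_range_succ, Finset.sum_eq_zero, zero_add, add_comm]
      intro j hj
      exact hg (n+1) j (Or.inr (by have := Finset.mem_range.1 hj; omega))
    rw [h2, h3]
    simp only [Finset.sum_range_succ]
    abel

variable {A : Type*} [NonUnitalCStarAlgebra A] [PartialOrder A] [StarOrderedRing A]

/-- The (non-closed) set `a A a`. -/
def herSet (a : A) : Set A := {z | ∃ w, z = a * w * a}

lemma quasi_nonneg {a : A} (ha : 0 ≤ a) {t : ℝ} (ht : t ∈ quasispectrum ℝ a) : 0 ≤ t :=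
  quasispectrum_nonneg_of_nonneg a ha t ht

lemma quasi_le_norm {a : A} {t : ℝ} (ht : t ∈ quasispectrum ℝ a) : t ≤ ‖a‖ := by
  have h2 : t ∈ spectrum ℝ (a : Unitization ℂ A) := by
    rwa [Unitization.quasispectrum_eq_spectrum_inr' ℝ ℂ a] at ht
  have h3 := spectrum.norm_le_norm_of_mem h2
  rw [Unitization.norm_inr] at h3
  exact (le_abs_self t).trans h3

lemma fm_contOn {a : A} (ha : 0 ≤ a) (m : ℕ) : ContinuousOn (fm m) (quasispectrum ℝ a) := by
  apply ContinuousOn.div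
  · fun_prop
  · fun_prop
  · intro t ht; exact (fm_denom_pos m (quasi_nonneg ha ht)).ne'

section ufacts

variable {a : A} (ha : 0 ≤ a) (m : ℕ)

lemma u_selfAdjoint : IsSelfAdjoint (cfcₙ (fm m) a) := cfcₙ_predicate _ _

include ha in
lemma u_norm_le : ‖cfcₙ (fm m) a‖ ≤ 1 :=
  norm_cfcₙ_le fun t ht => by
    rw [Real.norm_eq_abs]; exact abs_fm_le_one m (quasi_nonneg ha ht)

include ha in
lemma u_nonneg : 0 ≤ cfcₙ (fm m) a :=
  cfcₙ_nonneg fun t ht => fm_nonneg m (quasi_nonneg ha ht)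

include ha in
lemma mul_u_eq : a * cfcₙ (fm m) a = cfcₙ (fun t => t * fm m t) a := by
  have h := cfcₙ_mul id (fm m) a continuousOn_id rfl (fm_contOn ha m) (fm_zero m)
  rw [cfcₙ_id ℝ a ha.isSelfAdjoint] at h
  simp only [id_eq] at h
  exact h.symm

include ha in
lemma u_mul_eq : cfcₙ (fm m) a * a = cfcₙ (fun t => t * fm m t) a := by
  have h := cfcₙ_mul (fm m) id a (fm_contOn ha m) (fm_zero m) continuousOn_id rfl
  rw [cfcₙ_id ℝ a ha.isSelfAdjoint] at h
  simp only [id_eq] at h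
  rw [← h]
  exact cfcₙ_congr fun t _ => (mul_comm _ _)

include ha in
lemma u_comm : cfcₙ (fm m) a * a = a * cfcₙ (fm m) a := by
  rw [u_mul_eq ha m, mul_u_eq ha m]

include ha in
lemma u_mul_sub_norm : ‖cfcₙ (fm m) a * a - a‖ ≤ 1 / ((m : ℝ) + 1) := by
  rw [u_mul_eq ha m]
  nth_rewrite 2 [← cfcₙ_id ℝ a ha.isSelfAdjoint]
  rw [← cfcₙ_sub (fun t => t * fm m t) id a
    ((continuousOn_id.mul (fm_contOn ha m))) (by simp [fm_zero]) continuousOn_id rfl]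
  refine norm_cfcₙ_le fun t ht => ?_
  have ht0 := quasi_nonneg ha ht
  rw [Real.norm_eq_abs, abs_sub_comm]
  have h1 : id t - t * fm m t = t * (1 - fm m t) := by simp; ring
  rw [h1, abs_of_nonneg (fm_mul_nonneg m ht0)]
  exact fm_mul_le m ht0

include ha in
/-- `u = (m+1) • (a - a * u)`. -/
lemma u_key_identity :
    cfcₙ (fm m) a = ((m : ℝ) + 1) • (a - a * cfcₙ (fm m) a) := by
  rw [mul_u_eq ha m]
  nth_rewrite 2 [← cfcₙ_id ℝ a ha.isSelfAdjoint]
  rw [← cfcₙ_sub id (fun t => t * fm m t) a continuousOn_id rfl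
    ((continuousOn_id.mul (fm_contOn ha m))) (by simp [fm_zero])]
  rw [← cfcₙ_const_mul (((m : ℝ) + 1)) (fun t => id t - t * fm m t) a
    (continuousOn_id.sub (continuousOn_id.mul (fm_contOn ha m))) (by simp [fm_zero])]
  exact cfcₙ_congr fun t ht => (fm_identity m (quasi_nonneg ha ht)).symm

end ufacts

/-- Sub-lemma A: `0 ≤ x ≤ b` implies `x ∈ closure (b A b)`. -/
lemma mem_closure_herSet_of_le {x b : A} (hx : 0 ≤ x) (hxb : x ≤ b) :
    x ∈ closure (herSet b) := by
  have hb : 0 ≤ b := hx.trans hxb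
  have hbsa : IsSelfAdjoint b := hb.isSelfAdjoint
  set u : ℕ → A := fun m => cfcₙ (fm m) b with hu
  have husa : ∀ m, IsSelfAdjoint (u m) := fun m => u_selfAdjoint m
  have hunorm : ∀ m, ‖u m‖ ≤ 1 := fun m => u_norm_le hb m
  -- membership of the approximants
  have hmem : ∀ m, u m * x * u m ∈ herSet b := by
    intro m
    have hid : u m = ((m : ℝ) + 1) • (b - b * u m) := u_key_identity hb m
    have hid' : u m = ((m : ℝ) + 1) • (b - u m * b) := by
      conv_lhs => rw [← (husa m).star_eq, hid]
      rw [star_smul, star_sub, star_mul, (husa m).star_eq, hbsa.star_eq]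
      norm_num
    refine ⟨(((m : ℝ) + 1) * ((m : ℝ) + 1)) •
      (x - u m * x - x * u m + u m * x * u m), ?_⟩
    have key : (b - b * u m) * x * (b - u m * b)
        = b * (x - u m * x - x * u m + u m * x * u m) * b := by noncomm_ring
    calc u m * x * u m
        = (((m : ℝ) + 1) • (b - b * u m)) * x * (((m : ℝ) + 1) • (b - u m * b)) := by
          rw [← hid, ← hid']
      _ = (((m : ℝ) + 1) * ((m : ℝ) + 1)) • ((b - b * u m) * x * (b - u m * b)) := by
          simp [smul_mul_assoc, mul_smul_comm, smul_smul]
      _ = b * ((((m : ℝ) + 1) * ((m : ℝ) + 1)) •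
            (x - u m * x - x * u m + u m * x * u m)) * b := by
          rw [key, mul_smul_comm, smul_mul_assoc]
  -- quantitative convergence
  have hsx : IsSelfAdjoint (CFC.sqrt x) := (CFC.sqrt_nonneg (a := x)).isSelfAdjoint
  have hss : CFC.sqrt x * CFC.sqrt x = x := CFC.sqrt_mul_sqrt_self x hx
  set v : ℕ → A := fun m => CFC.sqrt x - CFC.sqrt x * u m with hv
  have hvnorm : ∀ m, ‖v m‖ ^ 2 ≤ 1 / ((m : ℝ) + 1) := by
    intro m
    have hvv : star (v m) * v m = x - u m * x - x * u m + u m * x * u m := by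
      calc star (v m) * v m
          = (CFC.sqrt x - u m * CFC.sqrt x) * (CFC.sqrt x - CFC.sqrt x * u m) := by
            rw [hv]; simp only [star_sub, star_mul, hsx.star_eq, (husa m).star_eq]
        _ = CFC.sqrt x * CFC.sqrt x - u m * (CFC.sqrt x * CFC.sqrt x)
            - (CFC.sqrt x * CFC.sqrt x) * u m + u m * ((CFC.sqrt x * CFC.sqrt x) * u m) := by
            noncomm_ring
        _ = x - u m * x - x * u m + u m * x * u m := by rw [hss]; noncomm_ring
    have hs' : (0:A) ≤ b - x := sub_nonneg.2 hxb
    have hs'sa : IsSelfAdjoint (CFC.sqrt (b - x)) := (CFC.sqrt_nonneg (a := b - x)).isSelfAdjoint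
    have hss' : CFC.sqrt (b - x) * CFC.sqrt (b - x) = b - x := CFC.sqrt_mul_sqrt_self _ hs'
    set d : A := CFC.sqrt (b - x) - CFC.sqrt (b - x) * u m with hd
    have hdd : star d * d = (b - x) - u m * (b - x) - (b - x) * u m + u m * (b - x) * u m := by
      calc star d * d
          = (CFC.sqrt (b-x) - u m * CFC.sqrt (b-x)) * (CFC.sqrt (b-x) - CFC.sqrt (b-x) * u m) := by
            rw [hd]; simp only [star_sub, star_mul, hs'sa.star_eq, (husa m).star_eq]
        _ = CFC.sqrt (b-x) * CFC.sqrt (b-x) - u m * (CFC.sqrt (b-x) * CFC.sqrt (b-x))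
            - (CFC.sqrt (b-x) * CFC.sqrt (b-x)) * u m
            + u m * ((CFC.sqrt (b-x) * CFC.sqrt (b-x)) * u m) := by
            noncomm_ring
        _ = _ := by rw [hss']; noncomm_ring
    have hsum : star (v m) * v m + star d * d = b - u m * b - b * u m + u m * b * u m := by
      rw [hvv, hdd]; noncomm_ring
    have hle : star (v m) * v m ≤ b - u m * b - b * u m + u m * b * u m := by
      rw [← hsum]
      exact le_add_of_nonneg_right (star_mul_self_nonneg d)
    have hwcfc : b - u m * b - b * u m + u m * b * u m
        = cfcₙ (fun t => (t - t * fm m t) - fm m t * (t - t * fm m t)) b := by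
      have h1 : u m * b = cfcₙ (fun t => t * fm m t) b := u_mul_eq hb m
      have h2 : b * u m = cfcₙ (fun t => t * fm m t) b := mul_u_eq hb m
      have h3 : u m * b * u m = cfcₙ (fun t => t * fm m t * fm m t) b := by
        rw [h1]
        exact (cfcₙ_mul (fun t => t * fm m t) (fm m) b
          (continuousOn_id.mul (fm_contOn hb m)) (by simp [fm_zero]) (fm_contOn hb m)
          (fm_zero m)).symm
      have hsub2 : cfcₙ (fun t => t - t * fm m t) b = b - cfcₙ (fun t => t * fm m t) b := by
        have hh := cfcₙ_sub id (fun t => t * fm m t) b continuousOn_id rfl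
          (continuousOn_id.mul (fm_contOn hb m)) (by simp [fm_zero])
        rw [cfcₙ_id ℝ b hbsa] at hh
        simp only [id_eq] at hh
        exact hh
      have hsub3 : cfcₙ (fun t => fm m t * (t - t * fm m t)) b
          = u m * (b - b * u m) := by
        have hh := cfcₙ_mul (fm m) (fun t => t - t * fm m t) b (fm_contOn hb m) (fm_zero m)
          (continuousOn_id.sub (continuousOn_id.mul (fm_contOn hb m))) (by simp [fm_zero])
        rw [hsub2, ← h2] at hh
        exact hh
      have hsub1 : cfcₙ (fun t => (t - t * fm m t) - fm m t * (t - t * fm m t)) b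
          = cfcₙ (fun t => t - t * fm m t) b - cfcₙ (fun t => fm m t * (t - t * fm m t)) b :=
        cfcₙ_sub (fun t => t - t * fm m t) (fun t => fm m t * (t - t * fm m t)) b
          (continuousOn_id.sub (continuousOn_id.mul (fm_contOn hb m))) (by simp [fm_zero])
          ((fm_contOn hb m).mul
            (continuousOn_id.sub (continuousOn_id.mul (fm_contOn hb m)))) (by simp [fm_zero])
      rw [hsub1, hsub2, hsub3, ← h2]
      noncomm_ring
    have hwn : ‖b - u m * b - b * u m + u m * b * u m‖ ≤ 1 / ((m : ℝ) + 1) := by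
      rw [hwcfc]
      refine norm_cfcₙ_le fun t ht => ?_
      rw [Real.norm_eq_abs]
      exact fm_sq_bound m (quasi_nonneg hb ht)
    calc ‖v m‖ ^ 2 = ‖star (v m) * v m‖ := by
          rw [CStarRing.norm_star_mul_self, sq]
      _ ≤ ‖b - u m * b - b * u m + u m * b * u m‖ :=
          CStarAlgebra.norm_le_norm_of_nonneg_of_le (star_mul_self_nonneg (v m)) hle
      _ ≤ 1 / ((m : ℝ) + 1) := hwn
  have hdiff : ∀ m, ‖x - u m * x * u m‖ ≤ 2 * ‖CFC.sqrt x‖ * ‖v m‖ := by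
    intro m
    have hx2 : x - u m * x * u m = CFC.sqrt x * v m + star (v m) * (CFC.sqrt x * u m) := by
      have hstv : star (v m) = CFC.sqrt x - u m * CFC.sqrt x := by
        rw [hv]; simp only [star_sub, star_mul, hsx.star_eq, (husa m).star_eq]
      rw [hstv, hv]
      simp only []
      calc x - u m * x * u m
          = CFC.sqrt x * CFC.sqrt x - u m * ((CFC.sqrt x * CFC.sqrt x) * u m) := by
            rw [hss]; noncomm_ring
        _ = CFC.sqrt x * (CFC.sqrt x - CFC.sqrt x * u m)
            + (CFC.sqrt x - u m * CFC.sqrt x) * (CFC.sqrt x * u m) := by noncomm_ring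
    rw [hx2]
    calc ‖CFC.sqrt x * v m + star (v m) * (CFC.sqrt x * u m)‖
        ≤ ‖CFC.sqrt x * v m‖ + ‖star (v m) * (CFC.sqrt x * u m)‖ := norm_add_le _ _
      _ ≤ ‖CFC.sqrt x‖ * ‖v m‖ + ‖v m‖ * (‖CFC.sqrt x‖ * ‖u m‖) := by
          gcongr
          · exact norm_mul_le _ _
          · refine (norm_mul_le _ _).trans ?_
            rw [norm_star]
            gcongr
            exact norm_mul_le _ _
      _ ≤ 2 * ‖CFC.sqrt x‖ * ‖v m‖ := by
          have h1 := hunorm m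
          have h4 : ‖v m‖ * (‖CFC.sqrt x‖ * ‖u m‖) ≤ ‖v m‖ * (‖CFC.sqrt x‖ * 1) :=
            mul_le_mul_of_nonneg_left
              (mul_le_mul_of_nonneg_left h1 (norm_nonneg _)) (norm_nonneg _)
          nlinarith [norm_nonneg (v m), norm_nonneg (CFC.sqrt x)]
  rw [Metric.mem_closure_iff]
  intro ε hε
  set K := ‖CFC.sqrt x‖ with hK
  have hK0 : 0 ≤ K := norm_nonneg _
  obtain ⟨m, hm⟩ : ∃ m : ℕ, (2 * K + 1) ^ 2 / ε ^ 2 < (m : ℝ) + 1 := by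
    obtain ⟨m, hm⟩ := exists_nat_gt ((2 * K + 1) ^ 2 / ε ^ 2)
    exact ⟨m, by linarith⟩
  refine ⟨u m * x * u m, hmem m, ?_⟩
  rw [dist_eq_norm]
  have h1 := hdiff m
  have h2 := hvnorm m
  have hv0 : (0:ℝ) ≤ ‖v m‖ := norm_nonneg _
  have hm1 : (0:ℝ) < (m : ℝ) + 1 := by positivity
  have h4 : ‖v m‖ ^ 2 < ε ^ 2 / (2 * K + 1) ^ 2 := by
    refine h2.trans_lt ?_
    rw [div_lt_div_iff₀ hm1 (by positivity)]
    calc 1 * (2 * K + 1) ^ 2 = (2 * K + 1) ^ 2 / ε ^ 2 * ε ^ 2 := by field_simp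
      _ < ((m : ℝ) + 1) * ε ^ 2 := by
          exact mul_lt_mul_of_pos_right hm (by positivity)
      _ = ε ^ 2 * ((m : ℝ) + 1) := by ring
  have h5 : ‖v m‖ < ε / (2 * K + 1) := by
    refine lt_of_pow_lt_pow_left₀ 2 (by positivity) ?_
    rw [div_pow]
    exact h4
  calc ‖x - u m * x * u m‖ ≤ 2 * K * ‖v m‖ := h1
    _ ≤ (2 * K + 1) * ‖v m‖ := mul_le_mul_of_nonneg_right (by linarith) hv0
    _ < (2 * K + 1) * (ε / (2 * K + 1)) := mul_lt_mul_of_pos_left h5 (by positivity)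
    _ = ε := by field_simp


/-- The subalgebra `a A a` for selfadjoint `a`. -/
def herSub (a : A) (ha : IsSelfAdjoint a) : NonUnitalStarSubalgebra ℂ A where
  carrier := herSet a
  add_mem' := by
    rintro x y ⟨w, rfl⟩ ⟨v, rfl⟩
    exact ⟨w + v, by noncomm_ring⟩
  zero_mem' := ⟨0, by simp⟩
  mul_mem' := by
    rintro x y ⟨w, rfl⟩ ⟨v, rfl⟩
    exact ⟨w * a * (a * v), by noncomm_ring⟩
  smul_mem' := by
    rintro c x ⟨w, rfl⟩
    exact ⟨c • w, by simp only [mul_smul_comm, smul_mul_assoc]⟩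
  star_mem' := by
    rintro x ⟨w, rfl⟩
    exact ⟨star w, by simp only [star_mul, ha.star_eq, mul_assoc]⟩

/-- The closed hereditary subalgebra generated by a positive element. -/
def her (a : A) (ha : IsSelfAdjoint a) : NonUnitalStarSubalgebra ℂ A :=
  (herSub a ha).topologicalClosure

lemma her_coe (a : A) (ha : IsSelfAdjoint a) : (her a ha : Set A) = closure (herSet a) := rfl

lemma her_isClosed (a : A) (ha : IsSelfAdjoint a) : IsClosed (her a ha : Set A) :=
  isClosed_closure

/-- `z (·) z` maps the hereditary set into itself. -/
lemma conj_mem_closure_herSet {a z : A} (hz : z ∈ closure (herSet a)) (w : A) :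
    z * w * z ∈ closure (herSet a) := by
  have hcont : Continuous fun t : A => t * w * t := by fun_prop
  have hmap : Set.MapsTo (fun t : A => t * w * t) (herSet a) (herSet a) := by
    rintro t ⟨v, rfl⟩
    exact ⟨v * a * (w * (a * v)), by noncomm_ring⟩
  simpa using map_mem_closure hcont hz hmap

lemma her_hereditary {a : A} (ha : IsSelfAdjoint a) :
    ∀ x b : A, 0 ≤ x → x ≤ b → b ∈ her a ha → x ∈ her a ha := by
  intro x b hx hxb hb
  rw [← SetLike.mem_coe, her_coe] at hb ⊢
  have h1 : x ∈ closure (herSet b) := mem_closure_herSet_of_le hx hxb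
  have h2 : herSet b ⊆ closure (herSet a) := by
    rintro z ⟨w, rfl⟩
    exact conj_mem_closure_herSet hb w
  exact closure_minimal h2 isClosed_closure h1

lemma self_mem_her {a : A} (ha : 0 ≤ a) : a ∈ her a ha.isSelfAdjoint := by
  rw [← SetLike.mem_coe, her_coe]
  exact mem_closure_herSet_of_le ha le_rfl

/-- Orthogonal positive elements annihilate through the algebra, given the
hypothesis that hereditary subalgebras are ideals. -/
lemma orth_annihilate
    (h : ∀ S : NonUnitalStarSubalgebra ℂ A, IsClosed (S : Set A) →
      (∀ a b : A, 0 ≤ a → a ≤ b → b ∈ S → a ∈ S) →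
      ∀ x ∈ S, ∀ y : A, y * x ∈ S ∧ x * y ∈ S)
    {p q : A} (hp : 0 ≤ p) (hq : 0 ≤ q) (hpq : p * q = 0) (y : A) :
    p * y * q = 0 := by
  have hyq : y * q ∈ her q hq.isSelfAdjoint :=
    (h _ (her_isClosed q hq.isSelfAdjoint) (her_hereditary hq.isSelfAdjoint)
      q (self_mem_her hq) y).1
  rw [← SetLike.mem_coe, her_coe] at hyq
  have hcont : Continuous fun t : A => p * t := by fun_prop
  have hmap : Set.MapsTo (fun t : A => p * t) (herSet q) ({0} : Set A) := by
    rintro t ⟨v, rfl⟩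
    simp only [Set.mem_singleton_iff]
    calc p * (q * v * q) = (p * q) * (v * q) := by noncomm_ring
      _ = 0 := by rw [hpq]; simp
  have := map_mem_closure hcont hyq hmap
  rw [closure_singleton, Set.mem_singleton_iff] at this
  rw [mul_assoc]
  exact this

/-- `0 ≤ r • p` for `0 ≤ r : ℝ`, `0 ≤ p`. -/
lemma real_smul_nonneg {r : ℝ} (hr : 0 ≤ r) {p : A} (hp : 0 ≤ p) : 0 ≤ r • p := by
  have h1 := star_mul_self_nonneg (Real.sqrt r • CFC.sqrt p)
  rwa [star_smul, star_trivial, smul_mul_smul_comm, Real.mul_self_sqrt hr,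
    (CFC.sqrt_nonneg (a := p)).isSelfAdjoint.star_eq, CFC.sqrt_mul_sqrt_self p hp] at h1

lemma real_smul_le_smul {r s : ℝ} (hrs : r ≤ s) {p : A} (hp : 0 ≤ p) : r • p ≤ s • p := by
  have := real_smul_nonneg (sub_nonneg.2 hrs) hp
  rw [sub_smul] at this
  exact sub_nonneg.1 this

/-- Almost-orthogonality estimate: norm of a sum of `P i * d * Q i` with
right factors pairwise orthogonal. -/
lemma norm_sum_sandwich_sq (s : Finset ℕ) (P Q : ℕ → A) (d : A) {K β : ℝ}
    (hK0 : 0 ≤ K)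
    (hQ : ∀ i ∈ s, ∀ j ∈ s, i ≠ j → Q i * star (Q j) = 0)
    (hK : ∀ i ∈ s, ‖d * (Q i * star (Q i)) * star d‖ ≤ K)
    (hP : ‖∑ i ∈ s, P i * star (P i)‖ ≤ β) :
    ‖∑ i ∈ s, P i * d * Q i‖ ^ 2 ≤ K * β := by
  set y : ℕ → A := fun i => P i * d * Q i with hy
  have hyy : (∑ i ∈ s, y i) * star (∑ i ∈ s, y i) = ∑ i ∈ s, y i * star (y i) := by
    rw [star_sum, Finset.sum_mul_sum]
    refine Finset.sum_congr rfl fun i hi => ?_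
    refine Finset.sum_eq_single_of_mem i hi fun j hj hji => ?_
    have hq0 := hQ i hi j hj (by exact fun hij => hji hij.symm)
    calc y i * star (y j)
        = P i * d * (Q i * star (Q j)) * (star d * star (P j)) := by
          rw [hy]; simp only [star_mul]; noncomm_ring
      _ = 0 := by rw [hq0]; simp
  have hterm : ∀ i ∈ s, y i * star (y i) ≤ K • (P i * star (P i)) := by
    intro i hi
    have h1 : y i * star (y i)
        = P i * (d * (Q i * star (Q i)) * star d) * star (P i) := by
      rw [hy]; simp only [star_mul]; noncomm_ring
    have h2 : P i * (d * (Q i * star (Q i)) * star d) * star (P i)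
        ≤ ‖d * (Q i * star (Q i)) * star d‖ • (P i * star (P i)) := by
      refine CStarAlgebra.star_right_conjugate_le_norm_smul ?_
      have : IsSelfAdjoint (Q i * star (Q i)) := by
        rw [IsSelfAdjoint, star_mul, star_star]
      rw [IsSelfAdjoint]
      simp only [star_mul, star_star, this.star_eq, mul_assoc]
    have h3 : ‖d * (Q i * star (Q i)) * star d‖ • (P i * star (P i))
        ≤ K • (P i * star (P i)) :=
      real_smul_le_smul (hK i hi) (mul_star_self_nonneg _)
    rw [h1]
    exact h2.trans h3
  have hsum_le : ∑ i ∈ s, y i * star (y i) ≤ K • (∑ i ∈ s, P i * star (P i)) := by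
    rw [Finset.smul_sum]
    exact Finset.sum_le_sum hterm
  have hnn : (0 : A) ≤ ∑ i ∈ s, y i * star (y i) :=
    Finset.sum_nonneg fun i _ => mul_star_self_nonneg _
  calc ‖∑ i ∈ s, y i‖ ^ 2 = ‖(∑ i ∈ s, y i) * star (∑ i ∈ s, y i)‖ := by
        rw [CStarRing.norm_self_mul_star, sq]
    _ = ‖∑ i ∈ s, y i * star (y i)‖ := by rw [hyy]
    _ ≤ ‖K • (∑ i ∈ s, P i * star (P i))‖ :=
        CStarAlgebra.norm_le_norm_of_nonneg_of_le hnn hsum_le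
    _ = K * ‖∑ i ∈ s, P i * star (P i)‖ := by
        rw [norm_smul, Real.norm_eq_abs, abs_of_nonneg hK0]
    _ ≤ K * β := by
        have hβ : 0 ≤ ‖∑ i ∈ s, P i * star (P i)‖ := norm_nonneg _
        exact mul_le_mul_of_nonneg_left hP hK0

lemma norm_sum_sandwich (s : Finset ℕ) (P Q : ℕ → A) (d : A) {K β : ℝ}
    (hK0 : 0 ≤ K) (hβ0 : 0 ≤ β)
    (hQ : ∀ i ∈ s, ∀ j ∈ s, i ≠ j → Q i * star (Q j) = 0)
    (hK : ∀ i ∈ s, ‖d * (Q i * star (Q i)) * star d‖ ≤ K ^ 2)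
    (hP : ‖∑ i ∈ s, P i * star (P i)‖ ≤ β ^ 2) :
    ‖∑ i ∈ s, P i * d * Q i‖ ≤ K * β := by
  have h := norm_sum_sandwich_sq s P Q d (by positivity) hQ hK hP
  have h2 : ‖∑ i ∈ s, P i * d * Q i‖ ^ 2 ≤ (K * β) ^ 2 := by
    calc ‖∑ i ∈ s, P i * d * Q i‖ ^ 2 ≤ K ^ 2 * β ^ 2 := h
      _ = (K * β) ^ 2 := by ring
  exact (pow_le_pow_iff_left₀ (norm_nonneg _) (by positivity) (by norm_num)).1 h2


/-! ### The main commutation lemma for nonnegative elements -/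

set_option maxHeartbeats 2000000 in
lemma commute_of_nonneg
    (h : ∀ S : NonUnitalStarSubalgebra ℂ A, IsClosed (S : Set A) →
      (∀ a b : A, 0 ≤ a → a ≤ b → b ∈ S → a ∈ S) →
      ∀ x ∈ S, ∀ y : A, y * x ∈ S ∧ x * y ∈ S)
    {a b : A} (ha : 0 ≤ a) (hb : 0 ≤ b) : a * b = b * a := by
  have hsa : IsSelfAdjoint a := ha.isSelfAdjoint
  set c : A := a * b - b * a with hc_def
  -- `c` lies in the hereditary subalgebra of `a`
  have hideal := h (her a hsa) (her_isClosed a hsa) (her_hereditary hsa)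
  have hc_memS : c ∈ her a hsa := by
    have h1 := hideal a (self_mem_her ha) b
    exact sub_mem h1.2 h1.1
  have hc_mem : c ∈ closure (herSet a) := by
    rw [← SetLike.mem_coe, her_coe] at hc_memS
    exact hc_memS
  -- orthogonality annihilation specialised to functions of `a`
  have horthfun : ∀ p q : A, 0 ≤ p → 0 ≤ q → p * q = 0 → ∀ y, p * y * q = 0 :=
    fun p q hp hq hpq y => orth_annihilate h hp hq hpq y
  -- it suffices to bound the norm of `c` by every positive ε
  have main : ∀ ε : ℝ, 0 < ε → ‖c‖ ≤ ε := by
    intro ε hε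
    -- step 1: approximate c by u * c * u
    obtain ⟨z, hz_mem, hz_close⟩ := Metric.mem_closure_iff.1 hc_mem (ε/6) (by positivity)
    obtain ⟨w, rfl⟩ := hz_mem
    rw [dist_eq_norm] at hz_close
    obtain ⟨m, hm⟩ := exists_nat_gt ((‖w‖ * (‖a‖ + 1) + ‖a‖ * ‖w‖ + 1) * (6 / ε))
    set u : A := cfcₙ (fm m) a with hu_def
    have husa : IsSelfAdjoint u := u_selfAdjoint m
    have hunorm : ‖u‖ ≤ 1 := u_norm_le ha m
    have huaa : ‖u * a - a‖ ≤ 1 / ((m:ℝ)+1) := u_mul_sub_norm ha m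
    have haua : ‖a * u - a‖ ≤ 1 / ((m:ℝ)+1) := by
      have : a * u - a = star (u * a - a) := by
        rw [star_sub, star_mul, husa.star_eq, hsa.star_eq]
      rw [this, norm_star]
      exact huaa
    have hucu_close : ‖u * c * u - c‖ ≤ ε/2 := by
      have hkey : u * c * u - c
          = u * (c - a * w * a) * u + ((u * a - a) * (w * (a * u))
            + a * (w * (a * u - a))) + (a * w * a - c) := by
        noncomm_ring
      have h1 : ‖u * (c - a * w * a) * u‖ ≤ ‖c - a * w * a‖ := by
        calc ‖u * (c - a * w * a) * u‖ ≤ ‖u * (c - a * w * a)‖ * ‖u‖ := norm_mul_le _ _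
          _ ≤ ‖u‖ * ‖c - a * w * a‖ * ‖u‖ := by
              gcongr; exact norm_mul_le _ _
          _ ≤ 1 * ‖c - a * w * a‖ * 1 := by
              gcongr <;> first | exact hunorm | positivity | exact norm_nonneg _
          _ = ‖c - a * w * a‖ := by ring
      have h2 : ‖(u * a - a) * (w * (a * u)) + a * (w * (a * u - a))‖
          ≤ 1/((m:ℝ)+1) * (‖w‖ * (‖a‖ + 1)) + ‖a‖ * (‖w‖ * (1/((m:ℝ)+1))) := by
        refine (norm_add_le _ _).trans ?_
        gcongr
        · calc ‖(u * a - a) * (w * (a * u))‖ ≤ ‖u * a - a‖ * ‖w * (a * u)‖ := norm_mul_le _ _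
            _ ≤ (1/((m:ℝ)+1)) * (‖w‖ * (‖a‖ + 1)) := by
                refine mul_le_mul huaa ?_ (norm_nonneg _) (by positivity)
                calc ‖w * (a * u)‖ ≤ ‖w‖ * ‖a * u‖ := norm_mul_le _ _
                  _ ≤ ‖w‖ * (‖a‖ * ‖u‖) := by gcongr; exact norm_mul_le _ _
                  _ ≤ ‖w‖ * (‖a‖ * 1) := by gcongr
                  _ ≤ ‖w‖ * (‖a‖ + 1) := by
                      have := norm_nonneg w; have := norm_nonneg a; nlinarith
        · calc ‖a * (w * (a * u - a))‖ ≤ ‖a‖ * ‖w * (a * u - a)‖ := norm_mul_le _ _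
            _ ≤ ‖a‖ * (‖w‖ * (1/((m:ℝ)+1))) := by
                gcongr
                calc ‖w * (a * u - a)‖ ≤ ‖w‖ * ‖a * u - a‖ := norm_mul_le _ _
                  _ ≤ ‖w‖ * (1/((m:ℝ)+1)) := by gcongr
      have hm' : (‖w‖ * (‖a‖ + 1) + ‖a‖ * ‖w‖) * (1/((m:ℝ)+1)) ≤ ε/6 := by
        have hmpos : (0:ℝ) < (m:ℝ) + 1 := by positivity
        set C : ℝ := ‖w‖ * (‖a‖ + 1) + ‖a‖ * ‖w‖ with hC_def
        have hC : 0 ≤ C := by positivity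
        have hmgt : (C+1) * (6/ε) < (m:ℝ)+1 := lt_of_lt_of_le hm (by linarith)
        have h6 := mul_lt_mul_of_pos_left hmgt hε
        rw [show ε * ((C+1)*(6/ε)) = 6*(C+1) by field_simp] at h6
        rw [mul_one_div, div_le_div_iff₀ hmpos (by norm_num)]
        linarith
      calc ‖u * c * u - c‖
          ≤ ‖u * (c - a * w * a) * u‖ + ‖(u * a - a) * (w * (a * u)) + a * (w * (a * u - a))‖
            + ‖a * w * a - c‖ := by
            rw [hkey]
            exact (norm_add_le _ _).trans (by gcongr; exact norm_add_le _ _)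
        _ ≤ ‖c - a * w * a‖ + (1/((m:ℝ)+1) * (‖w‖ * (‖a‖ + 1)) + ‖a‖ * (‖w‖ * (1/((m:ℝ)+1))))
            + ‖c - a * w * a‖ := by
            gcongr
            rw [norm_sub_rev]
        _ ≤ ε/6 + ε/6 + ε/6 := by
            refine add_le_add (add_le_add hz_close.le ?_) hz_close.le
            calc 1/((m:ℝ)+1) * (‖w‖ * (‖a‖ + 1)) + ‖a‖ * (‖w‖ * (1/((m:ℝ)+1)))
                = (‖w‖ * (‖a‖ + 1) + ‖a‖ * ‖w‖) * (1/((m:ℝ)+1)) := by ring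
              _ ≤ ε/6 := hm'
        _ ≤ ε/2 := by linarith
    -- step 2: the partition estimate
    set δ : ℝ := ε / (40 * (‖b‖ + 1)) with hδ_def
    have hδ : 0 < δ := by positivity
    set N : ℕ := ⌈‖a‖ / δ⌉₊ with hN_def
    have hNδ : ‖a‖ ≤ N * δ := by
      have h1 := Nat.le_ceil (‖a‖/δ)
      calc ‖a‖ = (‖a‖/δ)*δ := by field_simp
        _ ≤ N * δ := mul_le_mul_of_nonneg_right h1 hδ.le
    set fI : ℕ → ℝ → ℝ := fun i t => hatψ (t/δ - i) * fm m t with hfI_def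
    set rI : ℕ → ℝ → ℝ := fun i t => (t - i*δ) * fI i t with hrI_def
    have hfI_cont : ∀ i, ContinuousOn (fI i) (quasispectrum ℝ a) := fun i =>
      ((hatψ_continuous.comp ((continuous_id.div_const δ).sub continuous_const)).continuousOn).mul
        (fm_contOn ha m)
    have hfI_zero : ∀ i, fI i 0 = 0 := fun i => by simp [hfI_def, fm_zero]
    have hrI_cont : ∀ i, ContinuousOn (rI i) (quasispectrum ℝ a) := fun i =>
      ((continuous_id.sub continuous_const).continuousOn).mul (hfI_cont i)
    have hrI_zero : ∀ i, rI i 0 = 0 := fun i => by simp [hrI_def, hfI_def, fm_zero]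
    set F : ℕ → A := fun i => cfcₙ (fI i) a with hF_def
    set R : ℕ → A := fun i => cfcₙ (rI i) a with hR_def
    have hFsa : ∀ i, IsSelfAdjoint (F i) := fun i => cfcₙ_predicate _ _
    have hRsa : ∀ i, IsSelfAdjoint (R i) := fun i => cfcₙ_predicate _ _
    have ht0 : ∀ t ∈ quasispectrum ℝ a, (0:ℝ) ≤ t := fun t ht => quasi_nonneg ha ht
    have htding : ∀ t ∈ quasispectrum ℝ a, t/δ ≤ (N:ℝ) := by
      intro t ht
      rw [div_le_iff₀ hδ]
      exact (quasi_le_norm ht).trans hNδ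
    have hfI_nonneg : ∀ i, ∀ t ∈ quasispectrum ℝ a, 0 ≤ fI i t := fun i t ht =>
      mul_nonneg (hatψ_nonneg _) (fm_nonneg m (ht0 t ht))
    have hfI_le_one : ∀ i, ∀ t ∈ quasispectrum ℝ a, fI i t ≤ 1 := by
      intro i t ht
      have h1 := hatψ_nonneg (t/δ - i)
      have h2 := hatψ_le_one (t/δ - i)
      have h3 := fm_nonneg m (ht0 t ht)
      have h4 := fm_le_one m (ht0 t ht)
      show hatψ (t/δ - i) * fm m t ≤ 1
      nlinarith
    have hF_nonneg : ∀ i, 0 ≤ F i := fun i => cfcₙ_nonneg (hfI_nonneg i)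
    have hFnorm : ∀ i, ‖F i‖ ≤ 1 := fun i => norm_cfcₙ_le fun t ht => by
      rw [Real.norm_eq_abs, abs_of_nonneg (hfI_nonneg i t ht)]
      exact hfI_le_one i t ht
    have hrIabs : ∀ i, ∀ t ∈ quasispectrum ℝ a, |rI i t| ≤ δ := by
      intro i t ht
      rcases eq_or_ne (hatψ (t/δ - i)) 0 with h0 | h0
      · have : rI i t = 0 := by
          show (t - i*δ) * (hatψ (t/δ - i) * fm m t) = 0
          rw [h0]; ring
        rw [this, abs_zero]; exact hδ.le
      · have hlt : |t/δ - i| < 1 := abs_lt_one_of_hatψ_ne h0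
        have h2 : |t - i*δ| ≤ δ := by
          have he : t - i*δ = (t/δ - i) * δ := by field_simp
          rw [he, abs_mul, abs_of_pos hδ]
          nlinarith [abs_nonneg (t/δ - (i:ℝ))]
        calc |rI i t| = |t - i*δ| * |fI i t| := abs_mul _ _
          _ ≤ δ * 1 := mul_le_mul h2 (abs_le.2 ⟨by linarith [hfI_nonneg i t ht],
              hfI_le_one i t ht⟩) (abs_nonneg _) hδ.le
          _ = δ := mul_one δ
    have hRnorm : ∀ i, ‖R i‖ ≤ δ := fun i => norm_cfcₙ_le fun t ht => by
      rw [Real.norm_eq_abs]; exact hrIabs i t ht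
    -- orthogonality of the hats
    have hat_orth : ∀ (i j : ℕ), i+2 ≤ j ∨ j+2 ≤ i → ∀ t:ℝ,
        hatψ (t/δ - i) * hatψ (t/δ - j) = 0 := by
      intro i j hij t
      rcases eq_or_ne (hatψ (t/δ - i)) 0 with h0 | h0
      · rw [h0, zero_mul]
      rcases eq_or_ne (hatψ (t/δ - j)) 0 with h1 | h1
      · rw [h1, mul_zero]
      exfalso
      have hi := abs_lt_one_of_hatψ_ne h0
      have hj := abs_lt_one_of_hatψ_ne h1
      have hlt2 : |(i:ℝ) - j| < 2 := by
        calc |(i:ℝ) - j| = |(t/δ - j) + (-(t/δ - i))| := by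
              rw [show (i:ℝ) - j = (t/δ - j) + (-(t/δ - i)) by ring]
          _ ≤ |t/δ - j| + |(-(t/δ - i))| := abs_add_le _ _
          _ = |t/δ - j| + |t/δ - i| := by rw [abs_neg]
          _ < 2 := by linarith
      have hge2 : (2:ℝ) ≤ |(i:ℝ) - j| := by
        rcases hij with hij | hij
        · have : (i:ℝ) + 2 ≤ j := by exact_mod_cast hij
          rw [abs_sub_comm, abs_of_nonneg (by linarith)]
          linarith
        · have : (j:ℝ) + 2 ≤ i := by exact_mod_cast hij
          rw [abs_of_nonneg (by linarith)]
          linarith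
      linarith
    have hFF : ∀ i j, i+2 ≤ j ∨ j+2 ≤ i → F i * F j = 0 := by
      intro i j hij
      calc F i * F j = cfcₙ (fun t => fI i t * fI j t) a :=
            (cfcₙ_mul (fI i) (fI j) a (hfI_cont i) (hfI_zero i) (hfI_cont j) (hfI_zero j)).symm
        _ = cfcₙ (fun _ : ℝ => (0:ℝ)) a := cfcₙ_congr (fun t _ => by
            show fI i t * fI j t = 0
            show (hatψ (t/δ - i) * fm m t) * (hatψ (t/δ - j) * fm m t) = 0
            rw [show (hatψ (t/δ - i) * fm m t) * (hatψ (t/δ - j) * fm m t)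
              = (hatψ (t/δ - i) * hatψ (t/δ - j)) * (fm m t * fm m t) by ring,
              hat_orth i j hij t, zero_mul])
        _ = 0 := by simp
    have hRR : ∀ i j, i+2 ≤ j ∨ j+2 ≤ i → R i * R j = 0 := by
      intro i j hij
      calc R i * R j = cfcₙ (fun t => rI i t * rI j t) a :=
            (cfcₙ_mul (rI i) (rI j) a (hrI_cont i) (hrI_zero i) (hrI_cont j) (hrI_zero j)).symm
        _ = cfcₙ (fun _ : ℝ => (0:ℝ)) a := cfcₙ_congr (fun t _ => by
            show rI i t * rI j t = 0
            show ((t - i*δ) * (hatψ (t/δ - i) * fm m t)) * ((t - j*δ) * (hatψ (t/δ - j) * fm m t)) = 0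
            rw [show ((t - i*δ) * (hatψ (t/δ - i) * fm m t)) * ((t - j*δ) * (hatψ (t/δ - j) * fm m t))
              = (hatψ (t/δ - i) * hatψ (t/δ - j)) * ((t - i*δ) * (t - j*δ) * fm m t * fm m t) by ring,
              hat_orth i j hij t, zero_mul])
        _ = 0 := by simp
    -- sum of the F's
    have hsumF : ∑ i ∈ Finset.range (N+1), F i = u := by
      have h1 : ∑ i ∈ Finset.range (N+1), F i
          = cfcₙ (∑ i ∈ Finset.range (N+1), fI i) a :=
        (cfcₙ_sum (fun i => fI i) a _ (fun i _ => hfI_cont i) (fun i _ => hfI_zero i)).symm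
      rw [h1]
      refine cfcₙ_congr fun t ht => ?_
      show (∑ i ∈ Finset.range (N+1), fI i) t = fm m t
      rw [Finset.sum_apply]
      calc ∑ i ∈ Finset.range (N+1), fI i t
          = (∑ i ∈ Finset.range (N+1), hatψ (t/δ - i)) * fm m t := by
            rw [Finset.sum_mul]
        _ = 1 * fm m t := by
            rw [sum_hatψ N (div_nonneg (ht0 t ht) hδ.le) (htding t ht)]
        _ = fm m t := one_mul _
    -- decomposition of a * F i
    have haF : ∀ i, a * F i = ((i:ℝ)*δ) • F i + R i := by
      intro i
      have hmul := cfcₙ_mul id (fI i) a continuousOn_id rfl (hfI_cont i) (hfI_zero i)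
      rw [cfcₙ_id ℝ a hsa] at hmul
      simp only [id_eq] at hmul
      have h2 : ((i:ℝ)*δ) • F i = cfcₙ (fun t => ((i:ℝ)*δ) * fI i t) a :=
        (cfcₙ_const_mul _ (fI i) a (hfI_cont i) (hfI_zero i)).symm
      rw [← hmul, h2, hR_def]
      rw [← cfcₙ_add (fun t => ((i:ℝ)*δ) * fI i t) (rI i) a
        (continuousOn_const.mul (hfI_cont i)) (by simp [hfI_zero i]) (hrI_cont i) (hrI_zero i)]
      exact cfcₙ_congr fun t ht => by
        show t * fI i t = (i:ℝ)*δ * fI i t + rI i t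
        show t * fI i t = (i:ℝ)*δ * fI i t + (t - i*δ) * fI i t
        ring
    have hFa : ∀ i, F i * a = ((i:ℝ)*δ) • F i + R i := by
      intro i
      have hcomm : F i * a = a * F i := by
        have hmul1 := cfcₙ_mul (fI i) id a (hfI_cont i) (hfI_zero i) continuousOn_id rfl
        have hmul2 := cfcₙ_mul id (fI i) a continuousOn_id rfl (hfI_cont i) (hfI_zero i)
        rw [cfcₙ_id ℝ a hsa] at hmul1 hmul2
        simp only [id_eq] at hmul1 hmul2
        rw [← hmul1, ← hmul2]
        exact cfcₙ_congr fun t _ => mul_comm _ _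
      rw [hcomm]
      exact haF i
    -- the per-term identity
    have per_term : ∀ i j, F i * c * F j
        = (((i:ℝ)*δ) - ((j:ℝ)*δ)) • (F i * b * F j) + (R i * b * F j - F i * b * R j) := by
      intro i j
      have e1 : F i * c * F j = (F i * a) * (b * F j) - (F i * b) * (a * F j) := by
        rw [hc_def]; noncomm_ring
      rw [e1, hFa i, haF j, add_mul, mul_add, smul_mul_assoc, mul_smul_comm]
      rw [show F i * (b * F j) = F i * b * F j from (mul_assoc _ _ _).symm,
        show R i * (b * F j) = R i * b * F j from (mul_assoc _ _ _).symm]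
      module
    -- norm bound helpers
    have hKgen : ∀ (x : A) (Cx : ℝ), 0 ≤ Cx → ‖x‖ ≤ Cx →
        ‖b * (x * star x) * star b‖ ≤ (Cx * ‖b‖)^2 := by
      intro x Cx hCx hx
      calc ‖b * (x * star x) * star b‖ ≤ ‖b * (x * star x)‖ * ‖star b‖ := norm_mul_le _ _
        _ ≤ ‖b‖ * ‖x * star x‖ * ‖star b‖ := by gcongr; exact norm_mul_le _ _
        _ ≤ ‖b‖ * (‖x‖ * ‖star x‖) * ‖star b‖ := by gcongr; exact norm_mul_le _ _
        _ = ‖b‖ * (‖x‖ * ‖x‖) * ‖b‖ := by rw [norm_star, norm_star]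
        _ ≤ ‖b‖ * (Cx * Cx) * ‖b‖ := by
            have h0 := norm_nonneg x
            have h1 := norm_nonneg b
            nlinarith [mul_le_mul hx hx h0 hCx, mul_nonneg h1 h1]
        _ = (Cx * ‖b‖)^2 := by ring
    have hKF : ∀ j, ‖b * (F j * star (F j)) * star b‖ ≤ ‖b‖^2 := by
      intro j
      have := hKgen (F j) 1 zero_le_one (hFnorm j)
      simpa using this
    have hKR : ∀ j, ‖b * (R j * star (R j)) * star b‖ ≤ (δ*‖b‖)^2 :=
      fun j => hKgen (R j) δ hδ.le (hRnorm j)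
    -- β-bounds, uniform over finite index sets and index injections
    have hβ_gen : ∀ (G : ℕ → A) (gI : ℕ → ℝ → ℝ) (Cβ : ℝ), 0 ≤ Cβ →
        (∀ i, ContinuousOn (gI i) (quasispectrum ℝ a)) →
        (∀ i, gI i 0 = 0) →
        (∀ i, G i = cfcₙ (gI i) a) →
        (∀ i, IsSelfAdjoint (G i)) →
        (∀ i, ∀ t ∈ quasispectrum ℝ a, gI i t * gI i t ≤ Cβ^2 * hatψ (t/δ - i)) →
        ∀ (g : ℕ → ℕ), Function.Injective g →
        ∀ s : Finset ℕ, ‖∑ i ∈ s, G (g i) * star (G (g i))‖ ≤ Cβ ^ 2 := by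
      intro G gI Cβ hCβ hcont hzero hGdef hGsa hptbound g hg s
      have h1 : ∀ i, G (g i) * star (G (g i)) = cfcₙ (fun t => gI (g i) t * gI (g i) t) a := by
        intro i
        rw [(hGsa (g i)).star_eq, hGdef (g i)]
        exact (cfcₙ_mul _ _ a (hcont _) (hzero _) (hcont _) (hzero _)).symm
      have h2 := cfcₙ_sum (fun i => fun t => gI (g i) t * gI (g i) t) a s
        (fun i _ => (hcont _).mul (hcont _)) (fun i _ => by simp [hzero])
      rw [Finset.sum_congr rfl (fun i _ => h1 i), ← h2]
      refine norm_cfcₙ_le fun t ht => ?_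
      rw [Real.norm_eq_abs, Finset.sum_apply]
      have hnn : (0:ℝ) ≤ ∑ i ∈ s, gI (g i) t * gI (g i) t :=
        Finset.sum_nonneg fun i _ => mul_self_nonneg _
      rw [abs_of_nonneg hnn]
      calc ∑ i ∈ s, gI (g i) t * gI (g i) t
          ≤ ∑ i ∈ s, Cβ^2 * hatψ (t/δ - g i) :=
            Finset.sum_le_sum fun i _ => hptbound (g i) t ht
        _ = Cβ^2 * ∑ i ∈ s, hatψ (t/δ - g i) := by rw [Finset.mul_sum]
        _ = Cβ^2 * ∑ j ∈ s.image g, hatψ (t/δ - j) := by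
            rw [Finset.sum_image (fun i _ j _ hij => hg hij)]
        _ ≤ Cβ^2 * 1 := by
            have := sum_hatψ_le N (s.image g) (div_nonneg (ht0 t ht) hδ.le) (htding t ht)
            have h3 : (0:ℝ) ≤ Cβ^2 := by positivity
            nlinarith
        _ = Cβ^2 := mul_one _
    have hβF : ∀ (g : ℕ → ℕ), Function.Injective g →
        ∀ s : Finset ℕ, ‖∑ i ∈ s, F (g i) * star (F (g i))‖ ≤ (1:ℝ) ^ 2 := by
      refine hβ_gen F fI 1 zero_le_one hfI_cont hfI_zero (fun i => rfl) hFsa ?_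
      intro i t ht
      have h1 := hatψ_nonneg (t/δ - i)
      have h2 := hatψ_le_one (t/δ - i)
      have h3 := fm_nonneg m (ht0 t ht)
      have h4 := fm_le_one m (ht0 t ht)
      show (hatψ (t/δ - i) * fm m t) * (hatψ (t/δ - i) * fm m t) ≤ 1^2 * hatψ (t/δ - i)
      have e1 : hatψ (t/δ - i) * fm m t ≤ hatψ (t/δ - i) := by nlinarith
      have e2 : hatψ (t/δ - i) * fm m t ≤ 1 := by nlinarith
      have e3 : (0:ℝ) ≤ hatψ (t/δ - i) * fm m t := mul_nonneg h1 h3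
      calc (hatψ (t/δ - i) * fm m t) * (hatψ (t/δ - i) * fm m t)
          ≤ hatψ (t/δ - i) * 1 := mul_le_mul e1 e2 e3 h1
        _ = 1^2 * hatψ (t/δ - i) := by ring
    have hβR : ∀ (g : ℕ → ℕ), Function.Injective g →
        ∀ s : Finset ℕ, ‖∑ i ∈ s, R (g i) * star (R (g i))‖ ≤ δ ^ 2 := by
      refine hβ_gen R rI δ hδ.le hrI_cont hrI_zero (fun i => rfl) hRsa ?_
      intro i t ht
      have habs := hrIabs i t ht
      have h1 := hatψ_nonneg (t/δ - i)
      have h2 := hatψ_le_one (t/δ - i)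
      rcases eq_or_ne (hatψ (t/δ - i)) 0 with h0 | h0
      · have hz : rI i t = 0 := by
          show (t - i*δ) * (hatψ (t/δ - i) * fm m t) = 0
          rw [h0]; ring
        rw [hz]
        have : (0:ℝ) ≤ δ^2 * hatψ (t/δ - i) := by positivity
        nlinarith
      · -- rI² ≤ δ² ≤ δ² * 1 but we need ≤ δ² * hat; use rI = (t-iδ)·hat·fm and |t-iδ| ≤ δ
        have hlt : |t/δ - i| < 1 := abs_lt_one_of_hatψ_ne h0
        have hd2 : |t - i*δ| ≤ δ := by
          have he : t - i*δ = (t/δ - i) * δ := by field_simp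
          rw [he, abs_mul, abs_of_pos hδ]
          nlinarith [abs_nonneg (t/δ - (i:ℝ))]
        have h3 := fm_nonneg m (ht0 t ht)
        have h4 := fm_le_one m (ht0 t ht)
        show ((t - i*δ) * (hatψ (t/δ - i) * fm m t)) * ((t - i*δ) * (hatψ (t/δ - i) * fm m t))
          ≤ δ^2 * hatψ (t/δ - i)
        have habs2 : (t - i*δ) * (t - i*δ) ≤ δ^2 := by
          have h5 := abs_mul_abs_self (t - i*δ)
          nlinarith [abs_nonneg (t - i*δ)]
        have e1 : (hatψ (t/δ - i) * fm m t) * (hatψ (t/δ - i) * fm m t) ≤ hatψ (t/δ - i) := by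
          have e1a : hatψ (t/δ - i) * fm m t ≤ hatψ (t/δ - i) := by nlinarith
          have e1b : hatψ (t/δ - i) * fm m t ≤ 1 := by nlinarith
          have e1c : (0:ℝ) ≤ hatψ (t/δ - i) * fm m t := mul_nonneg h1 h3
          calc (hatψ (t/δ - i) * fm m t) * (hatψ (t/δ - i) * fm m t)
              ≤ hatψ (t/δ - i) * 1 := mul_le_mul e1a e1b e1c h1
            _ = hatψ (t/δ - i) := mul_one _
        calc ((t - i*δ) * (hatψ (t/δ - i) * fm m t)) * ((t - i*δ) * (hatψ (t/δ - i) * fm m t))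
            = ((t - i*δ) * (t - i*δ)) * ((hatψ (t/δ - i) * fm m t) * (hatψ (t/δ - i) * fm m t)) := by
              ring
          _ ≤ δ^2 * hatψ (t/δ - i) := by
              refine mul_le_mul habs2 e1 ?_ (by positivity)
              exact mul_self_nonneg _
    -- class bound: partition by parity and apply the sandwich lemma
    have class_bound : ∀ (r : Finset ℕ) (P Q : ℕ → A) (KQ βP : ℝ), 0 ≤ KQ → 0 ≤ βP →
        (∀ i j, i ≠ j → i % 2 = j % 2 → Q i * star (Q j) = 0) →
        (∀ i, ‖b * (Q i * star (Q i)) * star b‖ ≤ KQ ^ 2) →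
        (∀ s : Finset ℕ, ‖∑ i ∈ s, P i * star (P i)‖ ≤ βP ^ 2) →
        ‖∑ i ∈ r, P i * b * Q i‖ ≤ 2 * (KQ * βP) := by
      intro r P Q KQ βP hKQ hβP hQorth hKb hPb
      rw [← Finset.sum_filter_add_sum_filter_not r (fun i => i % 2 = 0)]
      refine (norm_add_le _ _).trans ?_
      have e1 : ‖∑ i ∈ r.filter (fun i => i % 2 = 0), P i * b * Q i‖ ≤ KQ * βP := by
        refine norm_sum_sandwich _ P Q b hKQ hβP ?_ (fun i _ => hKb i) (hPb _)
        intro i hi j hj hij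
        have h1 := (Finset.mem_filter.1 hi).2
        have h2 := (Finset.mem_filter.1 hj).2
        exact hQorth i j hij (by omega)
      have e2 : ‖∑ i ∈ r.filter (fun i => ¬(i % 2 = 0)), P i * b * Q i‖ ≤ KQ * βP := by
        refine norm_sum_sandwich _ P Q b hKQ hβP ?_ (fun i _ => hKb i) (hPb _)
        intro i hi j hj hij
        have h1 := (Finset.mem_filter.1 hi).2
        have h2 := (Finset.mem_filter.1 hj).2
        exact hQorth i j hij (by omega)
      linarith
    -- the double sum
    have hdouble : u * c * u
        = ∑ i ∈ Finset.range (N+1), ∑ j ∈ Finset.range (N+1), F i * c * F j := by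
      rw [← hsumF, Finset.sum_mul, Finset.sum_mul]
      exact Finset.sum_congr rfl fun i _ => by rw [Finset.mul_sum]
    have hzero_far : ∀ i j, i+2 ≤ j ∨ j+2 ≤ i → F i * c * F j = 0 := fun i j hij =>
      horthfun (F i) (F j) (hF_nonneg i) (hF_nonneg j) (hFF i j hij) c
    have htri : u * c * u
        = (∑ i ∈ Finset.range (N+1), F i * c * F i)
          + (∑ i ∈ Finset.range N, F i * c * F (i+1))
          + (∑ i ∈ Finset.range N, F (i+1) * c * F i) := by
      rw [hdouble]
      exact sum_tridiag N _ hzero_far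
    -- bound for the diagonal
    have hparF : ∀ i j, i ≠ j → i % 2 = j % 2 → F i * star (F j) = 0 := by
      intro i j hij hpar
      rw [(hFsa j).star_eq]
      exact hFF i j (by omega)
    have hparF1 : ∀ i j, i ≠ j → i % 2 = j % 2 → F (i+1) * star (F (j+1)) = 0 := by
      intro i j hij hpar
      rw [(hFsa (j+1)).star_eq]
      exact hFF (i+1) (j+1) (by omega)
    have hparR : ∀ i j, i ≠ j → i % 2 = j % 2 → R i * star (R j) = 0 := by
      intro i j hij hpar
      rw [(hRsa j).star_eq]
      exact hRR i j (by omega)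
    have hparR1 : ∀ i j, i ≠ j → i % 2 = j % 2 → R (i+1) * star (R (j+1)) = 0 := by
      intro i j hij hpar
      rw [(hRsa (j+1)).star_eq]
      exact hRR (i+1) (j+1) (by omega)
    have hβF0 := hβF id Function.injective_id
    have hβF1 := hβF (fun i => i + 1) (add_left_injective 1)
    have hβR0 := hβR id Function.injective_id
    have hβR1 := hβR (fun i => i + 1) (add_left_injective 1)
    simp only [id_eq] at hβF0 hβR0
    have hD : ‖∑ i ∈ Finset.range (N+1), F i * c * F i‖ ≤ 2*(‖b‖*δ) + 2*(δ*‖b‖*1) := by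
      have hDterm : ∀ i, F i * c * F i = R i * b * F i - F i * b * R i := by
        intro i
        have hpt := per_term i i
        rw [sub_self, zero_smul, zero_add] at hpt
        exact hpt
      rw [Finset.sum_congr rfl (fun i _ => hDterm i), Finset.sum_sub_distrib]
      refine (norm_sub_le _ _).trans ?_
      have e1 := class_bound (Finset.range (N+1)) R F ‖b‖ δ (norm_nonneg b) hδ.le
        hparF (fun i => hKF i) hβR0
      have e2 := class_bound (Finset.range (N+1)) F R (δ*‖b‖) 1 (by positivity) zero_le_one
        hparR (fun i => hKR i) hβF0
      linarith
    -- bound for the super-diagonal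
    have hU : ‖∑ i ∈ Finset.range N, F i * c * F (i+1)‖
        ≤ δ*(2*(‖b‖*1)) + (2*(‖b‖*δ) + 2*((δ*‖b‖)*1)) := by
      have hUterm : ∀ i : ℕ, F i * c * F (i+1)
          = (-δ) • (F i * b * F (i+1)) + (R i * b * F (i+1) - F i * b * R (i+1)) := by
        intro i
        have hpt := per_term i (i+1)
        rw [show ((i:ℝ)*δ - ((i+1:ℕ):ℝ)*δ) = -δ by push_cast; ring] at hpt
        exact hpt
      rw [Finset.sum_congr rfl (fun i _ => hUterm i), Finset.sum_add_distrib,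
        ← Finset.smul_sum, Finset.sum_sub_distrib]
      refine (norm_add_le _ _).trans ?_
      have e0 : ‖(-δ) • ∑ i ∈ Finset.range N, F i * b * F (i+1)‖
          ≤ δ * (2*(‖b‖*1)) := by
        rw [norm_smul, Real.norm_eq_abs, abs_neg, abs_of_pos hδ]
        refine mul_le_mul_of_nonneg_left ?_ hδ.le
        exact class_bound (Finset.range N) F (fun i => F (i+1)) ‖b‖ 1 (norm_nonneg b)
          zero_le_one hparF1 (fun i => hKF (i+1)) hβF0
      have e1 := class_bound (Finset.range N) R (fun i => F (i+1)) ‖b‖ δ (norm_nonneg b)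
        hδ.le hparF1 (fun i => hKF (i+1)) hβR0
      have e2 := class_bound (Finset.range N) F (fun i => R (i+1)) (δ*‖b‖) 1 (by positivity)
        zero_le_one hparR1 (fun i => hKR (i+1)) hβF0
      have e3 := norm_sub_le (∑ i ∈ Finset.range N, R i * b * F (i+1))
        (∑ i ∈ Finset.range N, F i * b * R (i+1))
      linarith
    -- bound for the sub-diagonal
    have hL : ‖∑ i ∈ Finset.range N, F (i+1) * c * F i‖
        ≤ δ*(2*(‖b‖*1)) + (2*(‖b‖*δ) + 2*((δ*‖b‖)*1)) := by
      have hLterm : ∀ i : ℕ, F (i+1) * c * F i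
          = δ • (F (i+1) * b * F i) + (R (i+1) * b * F i - F (i+1) * b * R i) := by
        intro i
        have hpt := per_term (i+1) i
        rw [show (((i+1:ℕ):ℝ)*δ - (i:ℝ)*δ) = δ by push_cast; ring] at hpt
        exact hpt
      rw [Finset.sum_congr rfl (fun i _ => hLterm i), Finset.sum_add_distrib,
        ← Finset.smul_sum, Finset.sum_sub_distrib]
      refine (norm_add_le _ _).trans ?_
      have e0 : ‖δ • ∑ i ∈ Finset.range N, F (i+1) * b * F i‖
          ≤ δ * (2*(‖b‖*1)) := by
        rw [norm_smul, Real.norm_eq_abs, abs_of_pos hδ]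
        refine mul_le_mul_of_nonneg_left ?_ hδ.le
        exact class_bound (Finset.range N) (fun i => F (i+1)) F ‖b‖ 1 (norm_nonneg b)
          zero_le_one hparF (fun i => hKF i) hβF1
      have e1 := class_bound (Finset.range N) (fun i => R (i+1)) F ‖b‖ δ (norm_nonneg b)
        hδ.le hparF (fun i => hKF i) hβR1
      have e2 := class_bound (Finset.range N) (fun i => F (i+1)) R (δ*‖b‖) 1 (by positivity)
        zero_le_one hparR (fun i => hKR i) hβF1
      have e3 := norm_sub_le (∑ i ∈ Finset.range N, R (i+1) * b * F i)
        (∑ i ∈ Finset.range N, F (i+1) * b * R i)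
      linarith
    -- total bound
    have hucu_bound : ‖u * c * u‖ ≤ 16 * (δ * ‖b‖) := by
      rw [htri]
      calc ‖(∑ i ∈ Finset.range (N+1), F i * c * F i)
            + (∑ i ∈ Finset.range N, F i * c * F (i+1))
            + (∑ i ∈ Finset.range N, F (i+1) * c * F i)‖
          ≤ ‖∑ i ∈ Finset.range (N+1), F i * c * F i‖
            + ‖∑ i ∈ Finset.range N, F i * c * F (i+1)‖
            + ‖∑ i ∈ Finset.range N, F (i+1) * c * F i‖ := by
            exact (norm_add_le _ _).trans (by gcongr; exact norm_add_le _ _)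
        _ ≤ 16 * (δ * ‖b‖) := by nlinarith [hD, hU, hL]
    have hδb : 16 * (δ * ‖b‖) ≤ ε/2 := by
      rw [hδ_def]
      have hb1 : (0:ℝ) < ‖b‖ + 1 := by positivity
      have : ‖b‖ / (‖b‖ + 1) ≤ 1 := by
        rw [div_le_one hb1]; linarith [norm_nonneg b]
      calc 16 * (ε / (40 * (‖b‖ + 1)) * ‖b‖) = (16/40) * ε * (‖b‖/(‖b‖+1)) := by
            field_simp
        _ ≤ (16/40) * ε * 1 := by
            refine mul_le_mul_of_nonneg_left this (by positivity)
        _ ≤ ε/2 := by linarith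
    calc ‖c‖ = ‖u * c * u - (u * c * u - c)‖ := by rw [sub_sub_cancel]
      _ ≤ ‖u * c * u‖ + ‖u * c * u - c‖ := norm_sub_le _ _
      _ ≤ 16 * (δ * ‖b‖) + ε/2 := by gcongr
      _ ≤ ε/2 + ε/2 := by linarith
      _ = ε := by ring
  have h0 : ‖c‖ ≤ 0 := le_of_forall_pos_le_add (fun ε hε => by simpa using main ε hε)
  have hzero : c = 0 := by rwa [norm_le_zero_iff] at h0
  rw [hc_def] at hzero
  exact sub_eq_zero.1 hzero


end CommHSA

open CommHSA in
/-- A C*-algebra in which every (closed) hereditary C*-subalgebra is a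
two-sided ideal is commutative. -/
theorem commutative_of_hereditary_subalgebras_ideals {A : Type*}
    [NonUnitalCStarAlgebra A] [PartialOrder A] [StarOrderedRing A]
    (h : ∀ S : NonUnitalStarSubalgebra ℂ A, IsClosed (S : Set A) →
      (∀ a b : A, 0 ≤ a → a ≤ b → b ∈ S → a ∈ S) →
      ∀ x ∈ S, ∀ y : A, y * x ∈ S ∧ x * y ∈ S) :
    ∀ a b : A, a * b = b * a := by
  have key : ∀ p q : A, 0 ≤ p → 0 ≤ q → Commute p q := fun p q hp hq =>
    commute_of_nonneg h hp hq
  have keySA : ∀ p q : A, IsSelfAdjoint p → IsSelfAdjoint q → Commute p q := by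
    intro p q hp hq
    have hdp : p⁺ - p⁻ = p := CFC.posPart_sub_negPart p hp
    have hdq : q⁺ - q⁻ = q := CFC.posPart_sub_negPart q hq
    rw [← hdp, ← hdq]
    exact ((key _ _ (CFC.posPart_nonneg p) (CFC.posPart_nonneg q)).sub_right
      (key _ _ (CFC.posPart_nonneg p) (CFC.negPart_nonneg q))).sub_left
      ((key _ _ (CFC.negPart_nonneg p) (CFC.posPart_nonneg q)).sub_right
        (key _ _ (CFC.negPart_nonneg p) (CFC.negPart_nonneg q)))
  intro a b
  have ha := realPart_add_I_smul_imaginaryPart a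
  have hb := realPart_add_I_smul_imaginaryPart b
  have : Commute a b := by
    rw [← ha, ← hb]
    have h11 := keySA _ _ (realPart a).2 (realPart b).2
    have h12 := keySA _ _ (realPart a).2 (imaginaryPart b).2
    have h21 := keySA _ _ (imaginaryPart a).2 (realPart b).2
    have h22 := keySA _ _ (imaginaryPart a).2 (imaginaryPart b).2
    exact (h11.add_right (h12.smul_right Complex.I)).add_left
      ((h21.add_right (h22.smul_right Complex.I)).smul_left Complex.I)
  exact this
end
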